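/- arXiv:1912.03228 — 2 statements merged into one kernel-verified Lean document; each statement's English description precedes it below -/
import Mathlib

section
/- Let V be a countable-dimensional complex vector space with basis E, and let F be a weakly E-compatible subspace and M a subspace with M ⊄ F and F ⊄ M. Then there exists a subspace F' ⊂ V, E-commensurable with F, such that F ∩ M is a hyperplane in F' ∩ M, and F'/(F' ∩ M) embeds as a hyperplane in F/(F ∩ M). -/
/-
Choose `φ ∈ Ψ` and `u ∈ F` with `φ u ≠ 0`, and `v ∈ M \ F`, and put `F' = (F ∩ ker φ) ⊕ ℂ v`.
Since `φ` is a finite combination of coordinate forms, `F ∩ ker φ` still contains the span of all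
but finitely many of the basis vectors spanning a finite-codimensional part of `F`, so `F'` is
weakly `E`-compatible; the line `ℂ (u + v)` meets both `F` and `F'` trivially and has the same sum
with both, so `F'` is commensurable with `F`. As `v ∈ M ⊆ ker φ`, `F' ∩ M = (F ∩ M) ⊕ ℂ v`.
Finally `F / (F ∩ M)` is the image of `F` in `V / M`, and there the image of `F'` is that of
`F ∩ ker φ`, a hyperplane in the image of `F` complementary to the class of `u`.
-/

/-- A subspace `F` of `V` is weakly `E`-compatible if it contains a subspace spanned by a
subset of the basis `E` which has finite codimension in `F`. -/
def WeaklyCompat {ι V : Type*} [AddCommGroup V] [Module ℂ V]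
    (E : Module.Basis ι ℂ V) (F : Submodule ℂ V) : Prop :=
  ∃ S : Set ι, Submodule.span ℂ (⇑E '' S) ≤ F ∧
    FiniteDimensional ℂ (↥F ⧸ Submodule.comap F.subtype (Submodule.span ℂ (⇑E '' S)))

/-- `F'` is `E`-commensurable with `F`. -/
def CommensurableWith {ι V : Type*} [AddCommGroup V] [Module ℂ V]
    (E : Module.Basis ι ℂ V) (F F' : Submodule ℂ V) : Prop :=
  WeaklyCompat E F' ∧ ∃ U : Submodule ℂ V, FiniteDimensional ℂ ↥U ∧
    F ⊔ U = F' ⊔ U ∧ Module.finrank ℂ ↥(F ⊓ U) = Module.finrank ℂ ↥(F' ⊓ U)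

open Submodule

section

variable {K V W P Q P' Q' : Type*} [Field K] [AddCommGroup V] [Module K V]
  [AddCommGroup W] [Module K W] [AddCommGroup P] [Module K P] [AddCommGroup Q] [Module K Q]
  [AddCommGroup P'] [Module K P'] [AddCommGroup Q'] [Module K Q']

def EmbedsAsHyperplane (K P Q : Type*) [Field K] [AddCommGroup P] [Module K P] [AddCommGroup Q]
    [Module K Q] : Prop :=
  ∃ f : P →ₗ[K] Q, Function.Injective f ∧
    ∃ y, y ∉ LinearMap.range f ∧ LinearMap.range f ⊔ K ∙ y = ⊤

theorem embedsAsHyperplane_of_sup_span_singleton_eq {A B : Submodule K W} {a : W}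
    (hBA : B ⊔ K ∙ a = A) (ha : a ∉ B) : EmbedsAsHyperplane K B A := by
  have hB : B ≤ A := hBA ▸ le_sup_left
  have haA : a ∈ A := hBA ▸ mem_sup_right (mem_span_singleton_self a)
  refine ⟨inclusion hB, inclusion_injective hB, ⟨a, haA⟩, ?_, ?_⟩
  · rwa [range_inclusion, mem_comap]
  · rw [range_inclusion, eq_top_iff]
    rintro ⟨x, hx⟩ -
    obtain ⟨b, hb, _, hc, rfl⟩ := mem_sup.mp (hBA ▸ hx : x ∈ B ⊔ K ∙ a)
    obtain ⟨c, rfl⟩ := mem_span_singleton.mp hc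
    have hsplit : (⟨b + c • a, hx⟩ : A) = ⟨b, hB hb⟩ + c • ⟨a, haA⟩ := rfl
    rw [hsplit]
    exact add_mem (mem_sup_left hb) (mem_sup_right (smul_mem _ c (mem_span_singleton_self _)))

theorem EmbedsAsHyperplane.congr (e₁ : P ≃ₗ[K] P') (e₂ : Q ≃ₗ[K] Q') :
    EmbedsAsHyperplane K P Q → EmbedsAsHyperplane K P' Q' := by
  rintro ⟨f, hf, y, hy, hfy⟩
  have hrange : LinearMap.range (e₂.toLinearMap ∘ₗ f ∘ₗ e₁.symm.toLinearMap) =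
      (LinearMap.range f).map (e₂ : Q →ₗ[K] Q') := by
    rw [LinearMap.range_comp, LinearMap.range_comp, LinearEquiv.range, Submodule.map_top]
  refine ⟨e₂.toLinearMap ∘ₗ f ∘ₗ e₁.symm.toLinearMap,
    e₂.injective.comp (hf.comp e₁.symm.injective), e₂ y, ?_, ?_⟩
  · rwa [hrange, mem_map_equiv, LinearEquiv.symm_apply_apply]
  · rw [hrange, ← Set.image_singleton, ← LinearEquiv.coe_coe, ← map_span, ← Submodule.map_sup,
      hfy, Submodule.map_top, LinearEquiv.range]

theorem finiteDimensional_quotient_comap_subtype_iff {A C : Submodule K V} (hAC : A ≤ C) :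
    FiniteDimensional K (C ⧸ comap C.subtype A) ↔
      ∃ W : Submodule K V, FiniteDimensional K W ∧ C ≤ A ⊔ W := by
  constructor
  · intro hfin
    obtain ⟨W, hW⟩ := Submodule.exists_isCompl (comap C.subtype A)
    have : FiniteDimensional K W := (quotientEquivOfIsCompl _ _ hW).finiteDimensional
    refine ⟨W.map C.subtype, inferInstance, ?_⟩
    calc C = map C.subtype (comap C.subtype A ⊔ W) := by rw [hW.sup_eq_top, map_subtype_top]
      _ ≤ A ⊔ W.map C.subtype := by
        rw [Submodule.map_sup, map_comap_subtype]
        exact sup_le_sup_right inf_le_right _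
  · rintro ⟨W, hW, hCW⟩
    have hC : A ⊔ W ⊓ C = C := by
      rw [← sup_inf_assoc_of_le W hAC, inf_eq_right.mpr hCW]
    let g : ↥(W ⊓ C) →ₗ[K] C ⧸ comap C.subtype A :=
      (comap C.subtype A).mkQ ∘ₗ inclusion inf_le_right
    have hg : Function.Surjective g := by
      rintro ⟨z⟩
      obtain ⟨a, ha, w, hw, hsum⟩ := mem_sup.mp (hC.symm ▸ z.2 : (z : V) ∈ A ⊔ W ⊓ C)
      refine ⟨⟨w, hw⟩, (Submodule.Quotient.eq _).mpr ?_⟩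
      show w - (z : V) ∈ A
      rw [← hsum, sub_add_cancel_right]
      exact A.neg_mem ha
    have : FiniteDimensional K ↥(W ⊓ C) := finiteDimensional_of_le inf_le_left
    exact Module.Finite.of_surjective g hg

theorem sup_span_singleton_add_left {P : Submodule K V} {x : V} (y : V) (hx : x ∈ P) :
    P ⊔ K ∙ (x + y) = P ⊔ K ∙ y := by
  apply le_antisymm <;> refine sup_le le_sup_left ((span_singleton_le_iff_mem _ _).mpr ?_)
  · exact add_mem (mem_sup_left hx) (mem_sup_right (mem_span_singleton_self y))
  · simpa using sub_mem (mem_sup_right (mem_span_singleton_self (x + y))) (mem_sup_left hx)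

theorem inf_ker_sup_span_singleton_eq {φ : Module.Dual K V} {F : Submodule K V} {u : V}
    (hu : u ∈ F) (hφu : φ u ≠ 0) : F ⊓ LinearMap.ker φ ⊔ K ∙ u = F := by
  rw [sup_comm, inf_comm, ← sup_inf_assoc_of_le _ ((span_singleton_le_iff_mem u F).mpr hu),
    LinearMap.span_singleton_sup_ker_eq_top φ hφu, top_inf_eq]

theorem inf_ker_sup_span_singleton_inf_eq {φ : Module.Dual K V} {F M : Submodule K V} {v : V}
    (hMφ : M ≤ LinearMap.ker φ) (hv : v ∈ M) :
    (F ⊓ LinearMap.ker φ ⊔ K ∙ v) ⊓ M = F ⊓ M ⊔ K ∙ v := by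
  rw [sup_comm, sup_inf_assoc_of_le _ ((span_singleton_le_iff_mem v M).mpr hv), inf_assoc,
    inf_eq_right.mpr hMφ, sup_comm]

theorem exists_apply_ne_zero_of_not_le_iInf_ker {Ψ : Set (Module.Dual K V)} {F : Submodule K V}
    (h : ¬ F ≤ ⨅ φ ∈ Ψ, LinearMap.ker φ) : ∃ φ ∈ Ψ, ∃ u ∈ F, φ u ≠ 0 := by
  obtain ⟨u, hu, huΨ⟩ := SetLike.not_le_iff_exists.mp h
  simp only [mem_iInf, LinearMap.mem_ker, not_forall] at huΨ
  obtain ⟨φ, hφ, hφu⟩ := huΨ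
  exact ⟨φ, hφ, u, hu, hφu⟩

noncomputable def quotientInfEquivMapMkQ (F M : Submodule K V) :
    (F ⧸ comap F.subtype (F ⊓ M)) ≃ₗ[K] map M.mkQ F :=
  have hker : comap F.subtype (F ⊓ M) = LinearMap.ker (M.mkQ ∘ₗ F.subtype) := by
    rw [LinearMap.ker_comp, ker_mkQ, comap_inf, comap_subtype_self, top_inf_eq]
  have hrange : LinearMap.range (M.mkQ ∘ₗ F.subtype) = map M.mkQ F := by
    rw [LinearMap.range_comp, range_subtype]
  (quotEquivOfEq _ _ hker).trans
    ((M.mkQ ∘ₗ F.subtype).quotKerEquivRange.trans (LinearEquiv.ofEq _ _ hrange))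

theorem embedsAsHyperplane_quotient_inf {F G M : Submodule K V} {u : V}
    (hsup : G ⊔ M ⊔ K ∙ u = F ⊔ M) (hu : u ∉ G ⊔ M) :
    EmbedsAsHyperplane K (G ⧸ comap G.subtype (G ⊓ M)) (F ⧸ comap F.subtype (F ⊓ M)) := by
  have hsup' : map M.mkQ G ⊔ K ∙ M.mkQ u = map M.mkQ F := by
    have := congrArg (map M.mkQ) hsup
    rwa [Submodule.map_sup, Submodule.map_sup, Submodule.map_sup, mkQ_map_self, sup_bot_eq,
      sup_bot_eq, map_span, Set.image_singleton] at this
  have hu' : M.mkQ u ∉ map M.mkQ G := by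
    rwa [← mem_comap, comap_map_mkQ, sup_comm]
  exact (embedsAsHyperplane_of_sup_span_singleton_eq hsup' hu').congr
    (quotientInfEquivMapMkQ G M).symm (quotientInfEquivMapMkQ F M).symm

theorem embedsAsHyperplane_quotient_inf_ker_sup_span_singleton {φ : Module.Dual K V}
    {F M : Submodule K V} {u v : V} (hMφ : M ≤ LinearMap.ker φ) (hu : u ∈ F) (hφu : φ u ≠ 0)
    (hv : v ∈ M) :
    EmbedsAsHyperplane K
      (↥(F ⊓ LinearMap.ker φ ⊔ K ∙ v) ⧸
        comap (F ⊓ LinearMap.ker φ ⊔ K ∙ v).subtype ((F ⊓ LinearMap.ker φ ⊔ K ∙ v) ⊓ M))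
      (F ⧸ comap F.subtype (F ⊓ M)) := by
  have hG : F ⊓ LinearMap.ker φ ⊔ K ∙ v ⊔ M = F ⊓ LinearMap.ker φ ⊔ M := by
    rw [sup_assoc, sup_eq_right.mpr ((span_singleton_le_iff_mem _ _).mpr hv)]
  apply embedsAsHyperplane_quotient_inf (u := u)
  · rw [hG, sup_right_comm, inf_ker_sup_span_singleton_eq hu hφu]
  · rw [hG]
    exact fun h => hφu (sup_le inf_le_right hMφ h)

theorem Module.Basis.finite_setOf_apply_ne_zero {ι : Type*} (E : Module.Basis ι K V)
    {φ : Module.Dual K V} (hφ : φ ∈ span K (Set.range E.coord)) : {i | φ (E i) ≠ 0}.Finite := by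
  induction hφ using span_induction with
  | mem _ h =>
    obtain ⟨j, rfl⟩ := h
    refine (Set.finite_singleton j).subset fun i hi => ?_
    by_contra hij
    simp [Module.Basis.coord_apply, Ne.symm hij] at hi
  | zero => simp
  | add φ ψ _ _ hφ hψ =>
    refine (hφ.union hψ).subset fun i hi => ?_
    by_contra h
    simp_all
  | smul c φ _ hφ =>
    refine hφ.subset fun i hi => ?_
    simp_all

end

theorem WeaklyCompat.of_inf_ker_le_of_le_sup {ι V : Type*} [AddCommGroup V] [Module ℂ V]
    {E : Module.Basis ι ℂ V} {F G W : Submodule ℂ V} {φ : Module.Dual ℂ V}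
    (hF : WeaklyCompat E F) (hφ : φ ∈ span ℂ (Set.range E.coord))
    (hFG : F ⊓ LinearMap.ker φ ≤ G) (hGF : G ≤ F ⊔ W) [FiniteDimensional ℂ W] :
    WeaklyCompat E G := by
  obtain ⟨S, hSF, hfin⟩ := hF
  obtain ⟨W₀, hW₀, hFW₀⟩ := (finiteDimensional_quotient_comap_subtype_iff hSF).mp hfin
  set T := {i | φ (E i) ≠ 0}
  have : FiniteDimensional ℂ (span ℂ (E '' (S ∩ T))) :=
    .span_of_finite ℂ ((E.finite_setOf_apply_ne_zero hφ).inter_of_right S |>.image E)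
  have hST : span ℂ (E '' (S \ T)) ≤ G := by
    refine le_trans (le_inf ((span_mono (Set.image_mono Set.sdiff_subset)).trans hSF) ?_) hFG
    rw [span_le]
    rintro _ ⟨i, hi, rfl⟩
    exact not_not.mp hi.2
  have hS : span ℂ (E '' S) = span ℂ (E '' (S \ T)) ⊔ span ℂ (E '' (S ∩ T)) := by
    rw [← span_union, ← Set.image_union, Set.sdiff_union_inter]
  refine ⟨S \ T, hST, (finiteDimensional_quotient_comap_subtype_iff hST).mpr
    ⟨span ℂ (E '' (S ∩ T)) ⊔ W₀ ⊔ W, inferInstance, ?_⟩⟩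
  calc G ≤ F ⊔ W := hGF
    _ ≤ span ℂ (E '' S) ⊔ W₀ ⊔ W := sup_le_sup_right hFW₀ _
    _ = span ℂ (E '' (S \ T)) ⊔ (span ℂ (E '' (S ∩ T)) ⊔ W₀ ⊔ W) := by
      rw [hS]; simp only [sup_assoc]

theorem commensurableWith_inf_ker_sup_span_singleton {ι V : Type*} [AddCommGroup V]
    [Module ℂ V] {E : Module.Basis ι ℂ V} {F : Submodule ℂ V} {φ : Module.Dual ℂ V} {u v : V}
    (hF : WeaklyCompat E F) (hφ : φ ∈ span ℂ (Set.range E.coord)) (hu : u ∈ F)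
    (hφu : φ u ≠ 0) (hv : v ∉ F) (hφv : φ v = 0) :
    CommensurableWith E F (F ⊓ LinearMap.ker φ ⊔ ℂ ∙ v) := by
  have hker : F ⊓ LinearMap.ker φ ⊔ ℂ ∙ v ≤ LinearMap.ker φ :=
    sup_le inf_le_right ((span_singleton_le_iff_mem _ _).mpr hφv)
  refine ⟨hF.of_inf_ker_le_of_le_sup hφ le_sup_left (sup_le_sup_right inf_le_left _),
    ℂ ∙ (u + v), inferInstance, ?_, ?_⟩
  · rw [sup_span_singleton_add_left v hu, add_comm,
      sup_span_singleton_add_left u (mem_sup_right (mem_span_singleton_self v)),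
      sup_right_comm, inf_ker_sup_span_singleton_eq hu hφu]
  · have hFU : F ⊓ ℂ ∙ (u + v) = ⊥ :=
      (disjoint_span_singleton.mpr fun h => absurd ((F.add_mem_iff_right hu).mp h) hv).eq_bot
    have hF'U : (F ⊓ LinearMap.ker φ ⊔ ℂ ∙ v) ⊓ ℂ ∙ (u + v) = ⊥ :=
      (disjoint_span_singleton.mpr fun h => absurd (by simpa [hφv] using hker h) hφu).eq_bot
    rw [hFU, hF'U]

theorem stmt10_general {ι V : Type*} [AddCommGroup V] [Module ℂ V]
    (E : Module.Basis ι ℂ V) (Vs : Submodule ℂ (Module.Dual ℂ V))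
    (hVs : Vs = Submodule.span ℂ (Set.range fun i => E.coord i))
    (Ψ : Set (Module.Dual ℂ V)) (hΨ : Ψ ⊆ (Vs : Set (Module.Dual ℂ V)))
    (M : Submodule ℂ V) (hM : M = ⨅ φ ∈ Ψ, LinearMap.ker φ)
    (F : Submodule ℂ V) (hFwc : WeaklyCompat E F)
    (h1 : ¬ M ≤ F) (h2 : ¬ F ≤ M) :
    ∃ F' : Submodule ℂ V, CommensurableWith E F F' ∧
      (F ⊓ M ≤ F' ⊓ M ∧ ∃ w ∈ F' ⊓ M, w ∉ F ⊓ M ∧ (F ⊓ M) ⊔ Submodule.span ℂ {w} = F' ⊓ M) ∧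
      ∃ f : (↥F' ⧸ Submodule.comap F'.subtype (F' ⊓ M)) →ₗ[ℂ]
            (↥F ⧸ Submodule.comap F.subtype (F ⊓ M)),
        Function.Injective f ∧
        ∃ x, x ∉ LinearMap.range f ∧ LinearMap.range f ⊔ Submodule.span ℂ {x} = ⊤ := by
  obtain ⟨φ, hφΨ, u, hu, hφu⟩ := exists_apply_ne_zero_of_not_le_iInf_ker (hM ▸ h2)
  obtain ⟨v, hvM, hvF⟩ := SetLike.not_le_iff_exists.mp h1
  have hMφ : M ≤ LinearMap.ker φ := hM ▸ iInf₂_le φ hφΨ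
  have hφ : φ ∈ span ℂ (Set.range E.coord) := hVs ▸ hΨ hφΨ
  refine ⟨F ⊓ LinearMap.ker φ ⊔ ℂ ∙ v,
    commensurableWith_inf_ker_sup_span_singleton hFwc hφ hu hφu hvF (hMφ hvM), ?_, ?_⟩
  · rw [inf_ker_sup_span_singleton_inf_eq hMφ hvM]
    exact ⟨le_sup_left, v, mem_sup_right (mem_span_singleton_self v), fun h => hvF h.1, rfl⟩
  · exact embedsAsHyperplane_quotient_inf_ker_sup_span_singleton hMφ hu hφu hvM

/-- If `F` is weakly `E`-compatible, `M = ⋂_{φ∈Ψ} ker φ` (`Ψ ⊂ V_*`),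
`M ⊄ F` and `F ⊄ M`, then there is `F'`, `E`-commensurable with `F`, such that `F ∩ M` is a
hyperplane in `F' ∩ M` and `F'/(F' ∩ M)` embeds as a hyperplane in `F/(F ∩ M)`. -/
theorem stmt10 {ι V : Type*} [Countable ι] [AddCommGroup V] [Module ℂ V]
    (E : Module.Basis ι ℂ V) (Vs : Submodule ℂ (Module.Dual ℂ V))
    (hVs : Vs = Submodule.span ℂ (Set.range fun i => E.coord i))
    (Ψ : Set (Module.Dual ℂ V)) (hΨ : Ψ ⊆ (Vs : Set (Module.Dual ℂ V)))
    (M : Submodule ℂ V) (hM : M = ⨅ φ ∈ Ψ, LinearMap.ker φ)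
    (F : Submodule ℂ V) (hFwc : WeaklyCompat E F)
    (h1 : ¬ M ≤ F) (h2 : ¬ F ≤ M) :
    ∃ F' : Submodule ℂ V, CommensurableWith E F F' ∧
      (F ⊓ M ≤ F' ⊓ M ∧ ∃ w ∈ F' ⊓ M, w ∉ F ⊓ M ∧ (F ⊓ M) ⊔ Submodule.span ℂ {w} = F' ⊓ M) ∧
      ∃ f : (↥F' ⧸ Submodule.comap F'.subtype (F' ⊓ M)) →ₗ[ℂ]
            (↥F ⧸ Submodule.comap F.subtype (F ⊓ M)),
        Function.Injective f ∧
        ∃ x, x ∉ LinearMap.range f ∧ LinearMap.range f ⊔ Submodule.span ℂ {x} = ⊤ :=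
  stmt10_general E Vs hVs Ψ hΨ M hM F hFwc h1 h2
end

section
/- Suppose V is a countable-dimensional complex vector space (type A setting), F₁ and F₂ are subspaces such that F₁ ∩ F₂ has infinite codimension in both F₁ and F₂, and F₂ is weakly E-compatible. Then there exists a sequence {F^(n)}_{n≥0} of subspaces, each E-commensurable with F₂, with F^(0) = F₂ and F₁ ∩ F^(0) ⊊ F₁ ∩ F^(1) ⊊ ⋯ ⊊ F₁ ∩ F^(n) ⊊ ⋯ a strictly increasing chain. -/
/-!
If `A ⊓ ⋂_{φ ∈ Φ} ker φ` has infinite codimension in `A`, then there are `aₙ ∈ A` and `φₙ ∈ Φ`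
forming a triangular system (`φₘ aₙ = 0` for `m < n`, `φₙ aₙ ≠ 0`), since finitely many functionals cut out a subspace of
finite codimension. For `A = F₂` and the given `Φ` this yields `wₙ, ψₙ`; for `A = F₁` and the
annihilator of `F₂` it yields `vₙ, χₙ`. Put `F⁽ⁿ⁾ = (F₂ ∩ ⋂_{i<n} ker ψᵢ) ⊕ span{vᵢ | i < n}`.
The first summand has the `n`-dimensional complement `span{wᵢ | i < n}` in `F₂`, and it is still
weakly `E`-compatible because each `ψᵢ ∈ V_*` is nonzero on only finitely many vectors of `E`;
so `U = span{wᵢ} ⊕ span{vᵢ}` witnesses that `F⁽ⁿ⁾` is commensurable with `F₂`. As the `ψᵢ`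
vanish on `F₁ ∋ vᵢ`, `F₁ ∩ F⁽ⁿ⁾ = (F₁ ∩ F₂) ⊕ span{vᵢ | i < n}`, which grows strictly because the
`vᵢ` are linearly independent and `span{vᵢ | i ≤ n}` meets `F₂ ⊆ ⋂ᵢ ker χᵢ` trivially.
-/

open Module Set Submodule

theorem inf_inf_sup_eq_of_le {α : Type*} [Lattice α] [IsModularLattice α] {a b c d : α}
    (hd : d ≤ a) (hc : a ≤ c) : a ⊓ (b ⊓ c ⊔ d) = a ⊓ b ⊔ d := by
  rw [sup_comm, inf_comm, sup_inf_assoc_of_le _ hd, inf_right_comm,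
    inf_eq_left.2 (inf_le_right.trans hc), inf_comm, sup_comm]

section LinearAlgebra

variable {K V : Type*} [Field K] [AddCommGroup V] [Module K V]

theorem finiteDimensional_quotient_comap_of_inf_le {N P Q : Submodule K V} (hQ : N ⊓ Q ≤ P)
    [FiniteDimensional K (N.map Q.mkQ)] : FiniteDimensional K (N ⧸ P.comap N.subtype) := by
  set L := Q.mkQ ∘ₗ N.subtype
  have hker : LinearMap.ker L ≤ P.comap N.subtype := fun x hx => hQ ⟨x.2, by simpa [L] using hx⟩
  have hrange : LinearMap.range L = N.map Q.mkQ := by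
    rw [LinearMap.range_comp, range_subtype]
  have : FiniteDimensional K (N ⧸ LinearMap.ker L) :=
    Module.Finite.equiv (L.quotKerEquivRange.trans (LinearEquiv.ofEq _ _ hrange)).symm
  exact Module.Finite.of_surjective _ (factor_surjective hker)

theorem finiteDimensional_quotient_comap_iff {N P : Submodule K V} :
    FiniteDimensional K (N ⧸ P.comap N.subtype) ↔
      ∃ W : Submodule K V, FiniteDimensional K W ∧ N ≤ P ⊔ W := by
  constructor
  · intro hfd
    obtain ⟨C, hC⟩ := (P.comap N.subtype).exists_isCompl
    have : FiniteDimensional K C := Module.Finite.equiv (quotientEquivOfIsCompl _ _ hC)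
    refine ⟨C.map N.subtype, inferInstance, fun x hx => ?_⟩
    obtain ⟨p, hp, c, hc, hpc⟩ := mem_sup.1 (hC.sup_eq_top ▸ mem_top : (⟨x, hx⟩ : N) ∈ _ ⊔ C)
    rw [show x = p + c from congrArg Subtype.val hpc.symm]
    exact add_mem_sup hp (mem_map_of_mem hc)
  · rintro ⟨W, hW, hNW⟩
    have hmap : N.map P.mkQ ≤ W.map P.mkQ := by
      simpa [Submodule.map_sup] using map_mono (f := P.mkQ) hNW
    have := Submodule.finiteDimensional_of_le hmap
    exact finiteDimensional_quotient_comap_of_inf_le inf_le_right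

theorem finiteDimensional_quotient_iInf_ker {ι : Type*} [Finite ι] (f : ι → Dual K V) :
    FiniteDimensional K (V ⧸ ⨅ i, LinearMap.ker (f i)) := by
  rw [← LinearMap.ker_pi]
  exact Module.Finite.equiv (LinearMap.pi f).quotKerEquivRange.symm

theorem iInf_ker_dualAnnihilator (W : Submodule K V) :
    ⨅ φ ∈ (W.dualAnnihilator : Set (Dual K V)), LinearMap.ker φ = W := by
  conv_rhs => rw [← Subspace.dualAnnihilator_dualCoannihilator_eq (W := W)]
  ext x
  simp only [Submodule.mem_iInf, LinearMap.mem_ker, SetLike.mem_coe, mem_dualCoannihilator]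

structure IsTriangular (a : ℕ → V) (φ : ℕ → Dual K V) : Prop where
  apply_self_ne_zero : ∀ n, φ n (a n) ≠ 0
  apply_eq_zero_of_lt : ∀ ⦃m n⦄, m < n → φ m (a n) = 0

theorem exists_isTriangular_of_not_finiteDimensional (A : Submodule K V) (Φ : Set (Dual K V))
    (h : ¬ FiniteDimensional K (A ⧸ (A ⊓ ⨅ φ ∈ Φ, LinearMap.ker φ).comap A.subtype)) :
    ∃ (a : ℕ → V) (φ : ℕ → Dual K V), IsTriangular a φ ∧ (∀ n, a n ∈ A) ∧ ∀ n, φ n ∈ Φ := by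
  classical
  have hstep : ∀ s : Finset (Dual K V),
      ∃ x ∈ A, (∀ ψ ∈ s, ψ x = 0) ∧ ∃ φ ∈ Φ, φ x ≠ 0 := by
    intro s
    by_contra! hs
    have := finiteDimensional_quotient_iInf_ker fun ψ : s => (ψ : Dual K V)
    refine h (finiteDimensional_quotient_comap_of_inf_le (Q := ⨅ ψ : s, LinearMap.ker ψ.1) ?_)
    rintro x ⟨hxA, hxs⟩
    simp only [SetLike.mem_coe, Submodule.mem_iInf, LinearMap.mem_ker, Subtype.forall] at hxA hxs
    simpa [hxA] using hs x hxA hxs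
  obtain ⟨f, hfP, hfr⟩ := exists_seq_of_forall_finset_exists
    (fun p : V × Dual K V => p.1 ∈ A ∧ p.2 ∈ Φ ∧ p.2 p.1 ≠ 0) (fun p q => p.2 q.1 = 0)
    fun s _ => by
      obtain ⟨x, hxA, hxs, φ, hφ, hφx⟩ := hstep (s.image Prod.snd)
      exact ⟨(x, φ), ⟨hxA, hφ, hφx⟩, fun p hp => hxs _ (Finset.mem_image_of_mem _ hp)⟩
  exact ⟨fun n => (f n).1, fun n => (f n).2, ⟨fun n => (hfP n).2.2, hfr⟩,
    fun n => (hfP n).1, fun n => (hfP n).2.1⟩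

namespace IsTriangular

variable {a : ℕ → V} {φ : ℕ → Dual K V}

theorem linearIndependent (h : IsTriangular a φ) : LinearIndependent K a := by
  rw [linearIndependent_iff']
  intro s g hg i
  induction i using Nat.strong_induction_on with
  | _ i ih =>
    intro hi
    have := congrArg (φ i) hg
    rw [map_sum, map_zero, Finset.sum_eq_single i] at this
    · simpa [h.apply_self_ne_zero i] using this
    · intro j hj hji
      rcases lt_or_gt_of_ne hji with hlt | hgt
      · simp [ih j hlt hj]
      · simp [h.apply_eq_zero_of_lt hgt]
    · exact fun hi' => absurd hi hi'

theorem finrank_span_image_Iio (h : IsTriangular a φ) (n : ℕ) :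
    finrank K (span K (a '' Iio n)) = n := by
  have := finrank_span_eq_card (h.linearIndependent.comp (Subtype.val : Iio n → ℕ)
    Subtype.val_injective)
  rw [Set.range_comp, Subtype.range_coe] at this
  simpa using this

theorem disjoint_span_iInf_ker (h : IsTriangular a φ) (n : ℕ) :
    Disjoint (span K (a '' Iio n)) (⨅ i < n, LinearMap.ker (φ i)) := by
  induction n with
  | zero => simp
  | succ n ih =>
    rw [disjoint_def] at ih ⊢
    intro x hx hxK
    rw [← Order.succ_eq_add_one, Order.Iio_succ_eq_insert, image_insert_eq, mem_span_insert] at hx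
    obtain ⟨c, y, hy, rfl⟩ := hx
    simp only [Nat.iInf_lt_succ, mem_inf, mem_iInf, LinearMap.mem_ker] at hxK
    obtain rfl : y = 0 := ih y hy <| by
      simp only [mem_iInf, LinearMap.mem_ker]
      intro i hi
      simpa [h.apply_eq_zero_of_lt hi] using hxK.1 i hi
    simp [show c = 0 by simpa [h.apply_self_ne_zero n] using hxK.2]

theorem codisjoint_span_iInf_ker (h : IsTriangular a φ) (n : ℕ) :
    Codisjoint (span K (a '' Iio n)) (⨅ i < n, LinearMap.ker (φ i)) := by
  induction n with
  | zero => simp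
  | succ n ih =>
    rw [codisjoint_iff, eq_top_iff] at ih ⊢
    intro x _
    obtain ⟨y, hy, z, hz, rfl⟩ := mem_sup.1 (ih (mem_top (x := x)))
    set c := φ n z / φ n (a n)
    have hz' : z - c • a n ∈ ⨅ i < n + 1, LinearMap.ker (φ i) := by
      simp only [Nat.iInf_lt_succ, mem_inf, mem_iInf, LinearMap.mem_ker] at hz ⊢
      refine ⟨fun i hi => by simp [hz i hi, h.apply_eq_zero_of_lt hi], ?_⟩
      simp [c, h.apply_self_ne_zero]
    have hy' : y + c • a n ∈ span K (a '' Iio (n + 1)) := by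
      rw [← Order.succ_eq_add_one, Order.Iio_succ_eq_insert, image_insert_eq, span_insert]
      exact add_mem (mem_sup_right hy) (mem_sup_left (smul_mem _ _ (mem_span_singleton_self _)))
    convert add_mem_sup hy' hz' using 1
    abel

theorem notMem_sup_span {X : Submodule K V} (h : IsTriangular a φ) {n : ℕ}
    (hX : X ≤ ⨅ i < n + 1, LinearMap.ker (φ i)) : a n ∉ X ⊔ span K (a '' Iio n) := by
  intro hmem
  obtain ⟨x, hx, y, hy, hxy⟩ := mem_sup.1 hmem
  have hx' : x ∈ span K (a '' Iio (n + 1)) := by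
    rw [eq_sub_of_add_eq hxy]
    exact sub_mem (subset_span ⟨n, n.lt_succ_self, rfl⟩)
      (span_mono (image_mono (Iio_subset_Iio n.le_succ)) hy)
  have hx0 : x = 0 := disjoint_def.1 (h.disjoint_span_iInf_ker (n + 1)) x hx' (hX hx)
  exact h.linearIndependent.notMem_span_image (s := Iio n) (lt_irrefl n)
    (by rwa [← hxy, hx0, zero_add])

end IsTriangular

end LinearAlgebra

section Compatibility

variable {ι V : Type*} [AddCommGroup V] [Module ℂ V] {E : Basis ι ℂ V}

theorem weaklyCompat_iff {F : Submodule ℂ V} :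
    WeaklyCompat E F ↔ ∃ S : Set ι, span ℂ (E '' S) ≤ F ∧
      ∃ W : Submodule ℂ V, FiniteDimensional ℂ W ∧ F ≤ span ℂ (E '' S) ⊔ W := by
  simp only [WeaklyCompat, finiteDimensional_quotient_comap_iff]

theorem WeaklyCompat.sup_of_finiteDimensional {F W : Submodule ℂ V} (hF : WeaklyCompat E F)
    [FiniteDimensional ℂ W] : WeaklyCompat E (F ⊔ W) := by
  obtain ⟨S, hSF, W₀, hW₀, hFW₀⟩ := weaklyCompat_iff.1 hF
  refine weaklyCompat_iff.2 ⟨S, hSF.trans le_sup_left, W₀ ⊔ W, inferInstance, ?_⟩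
  rw [← sup_assoc]
  exact sup_le_sup_right hFW₀ W

theorem Module.Basis.exists_finset_apply_eq_zero {R M : Type*} [CommSemiring R]
    [AddCommMonoid M] [Module R M] (E : Basis ι R M) {ψ : Dual R M}
    (hψ : ψ ∈ span R (range E.coord)) :
    ∃ T : Finset ι, ∀ k ∉ T, ψ (E k) = 0 := by
  obtain ⟨c, rfl⟩ := Finsupp.mem_span_range_iff_exists_finsupp.1 hψ
  refine ⟨c.support, fun k hk => ?_⟩
  simp only [Finsupp.sum, LinearMap.coe_sum, LinearMap.coe_smul, Finset.sum_apply, Pi.smul_apply,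
    coord_apply, repr_self, smul_eq_mul]
  exact Finset.sum_eq_zero fun i hi => by
    rw [Finsupp.single_eq_of_ne (ne_of_mem_of_not_mem hi hk), mul_zero]

theorem WeaklyCompat.inf_ker {F : Submodule ℂ V} (hF : WeaklyCompat E F) {ψ : Dual ℂ V}
    (hψ : ψ ∈ span ℂ (range E.coord)) : WeaklyCompat E (F ⊓ LinearMap.ker ψ) := by
  obtain ⟨S, hSF, W, hW, hFW⟩ := weaklyCompat_iff.1 hF
  obtain ⟨T, hT⟩ := E.exists_finset_apply_eq_zero hψ
  have hsplit : span ℂ (E '' S) ≤ span ℂ (E '' (S \ T)) ⊔ span ℂ (E '' (S ∩ T)) := by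
    rw [← span_union, ← image_union, sdiff_union_inter]
  have : FiniteDimensional ℂ (span ℂ (E '' (S ∩ T))) :=
    FiniteDimensional.span_of_finite ℂ ((T.finite_toSet.subset inter_subset_right).image E)
  refine weaklyCompat_iff.2 ⟨S \ T, le_inf ((span_mono (image_mono sdiff_subset)).trans hSF)
    (span_le.2 ?_), span ℂ (E '' (S ∩ T)) ⊔ W, inferInstance, ?_⟩
  · rintro _ ⟨k, hk, rfl⟩
    exact hT k hk.2
  · calc F ⊓ LinearMap.ker ψ ≤ span ℂ (E '' S) ⊔ W := inf_le_left.trans hFW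
      _ ≤ span ℂ (E '' (S \ T)) ⊔ (span ℂ (E '' (S ∩ T)) ⊔ W) := by
        rw [← sup_assoc]
        exact sup_le_sup_right hsplit W

theorem WeaklyCompat.inf_iInf_ker_lt {F : Submodule ℂ V} (hF : WeaklyCompat E F)
    {ψ : ℕ → Dual ℂ V} (hψ : ∀ n, ψ n ∈ span ℂ (range E.coord)) (n : ℕ) :
    WeaklyCompat E (F ⊓ ⨅ i < n, LinearMap.ker (ψ i)) := by
  induction n with
  | zero => simpa using hF
  | succ n ih =>
    rw [Nat.iInf_lt_succ, ← inf_assoc]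
    exact ih.inf_ker (hψ n)

theorem commensurableWith_sup_of_finrank_eq {F G C D : Submodule ℂ V} [FiniteDimensional ℂ C]
    [FiniteDimensional ℂ D] (hGD : WeaklyCompat E (G ⊔ D)) (hGC : G ⊔ C = F)
    (hG : Disjoint G C) (hF : Disjoint F D) (hrank : finrank ℂ C = finrank ℂ D) :
    CommensurableWith E F (G ⊔ D) := by
  have hCF : C ≤ F := hGC ▸ le_sup_right
  have hFU : F ⊓ (C ⊔ D) = C := by
    rw [inf_comm, sup_inf_assoc_of_le D hCF, hF.symm.eq_bot, sup_bot_eq]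
  have hGDU : (G ⊔ D) ⊓ (C ⊔ D) = D := by
    rw [sup_comm G, sup_inf_assoc_of_le G le_sup_right]
    have : G ⊓ (C ⊔ D) = ⊥ := by
      rw [← inf_eq_left.2 (hGC ▸ le_sup_left : G ≤ F), inf_assoc, hFU, hG.eq_bot]
    rw [this, sup_bot_eq]
  refine ⟨hGD, C ⊔ D, inferInstance, ?_, by rw [hFU, hGDU, hrank]⟩
  rw [← hGC]
  simp only [sup_left_comm, sup_idem, sup_left_idem, sup_comm]

end Compatibility

theorem stmt11_general {ι V : Type*} [AddCommGroup V] [Module ℂ V]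
    (E : Module.Basis ι ℂ V) (Vs : Submodule ℂ (Module.Dual ℂ V))
    (hVs : Vs = Submodule.span ℂ (Set.range fun i => E.coord i))
    (Φ : Set (Module.Dual ℂ V)) (hΦ : Φ ⊆ (Vs : Set (Module.Dual ℂ V)))
    (F₁ : Submodule ℂ V) (hF₁ : F₁ = ⨅ φ ∈ Φ, LinearMap.ker φ)
    (F₂ : Submodule ℂ V) (hF₂ : WeaklyCompat E F₂)
    (hcodim₁ : ¬ FiniteDimensional ℂ (↥F₁ ⧸ Submodule.comap F₁.subtype (F₁ ⊓ F₂)))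
    (hcodim₂ : ¬ FiniteDimensional ℂ (↥F₂ ⧸ Submodule.comap F₂.subtype (F₁ ⊓ F₂))) :
    ∃ Fs : ℕ → Submodule ℂ V, Fs 0 = F₂ ∧ (∀ n, CommensurableWith E F₂ (Fs n)) ∧
      StrictMono fun n => F₁ ⊓ Fs n := by
  obtain ⟨w, ψ, hwψ, hw, hψ⟩ :=
    exists_isTriangular_of_not_finiteDimensional F₂ Φ (by rwa [← hF₁, inf_comm])
  obtain ⟨v, χ, hvχ, hv, hχ⟩ := exists_isTriangular_of_not_finiteDimensional F₁
    F₂.dualAnnihilator (by rwa [iInf_ker_dualAnnihilator])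
  have hF₁ψ : ∀ n, F₁ ≤ ⨅ i < n, LinearMap.ker (ψ i) := fun n =>
    hF₁ ▸ le_iInf₂ fun i _ => iInf₂_le _ (hψ i)
  have hF₂χ : ∀ n, F₂ ≤ ⨅ i < n, LinearMap.ker (χ i) := fun n =>
    le_iInf₂ fun i _ x hx => (mem_dualAnnihilator _).1 (hχ i) x hx
  have hvF₁ : ∀ n, span ℂ (v '' Iio n) ≤ F₁ := fun n =>
    span_le.2 (image_subset_iff.2 fun i _ => hv i)
  refine ⟨fun n => (F₂ ⊓ ⨅ i < n, LinearMap.ker (ψ i)) ⊔ span ℂ (v '' Iio n), by simp,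
    fun n => ?_, ?_⟩
  · have hwF₂ : span ℂ (w '' Iio n) ≤ F₂ := span_le.2 (image_subset_iff.2 fun i _ => hw i)
    have := FiniteDimensional.span_of_finite ℂ ((finite_Iio n).image w)
    have := FiniteDimensional.span_of_finite ℂ ((finite_Iio n).image v)
    refine commensurableWith_sup_of_finrank_eq (C := span ℂ (w '' Iio n))
      (hF₂.inf_iInf_ker_lt (fun i => hVs ▸ hΦ (hψ i)) n).sup_of_finiteDimensional ?_
      ((hwψ.disjoint_span_iInf_ker n).symm.mono_left inf_le_right)
      ((hvχ.disjoint_span_iInf_ker n).symm.mono_left (hF₂χ n))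
      (by rw [hwψ.finrank_span_image_Iio, hvχ.finrank_span_image_Iio])
    rw [inf_sup_assoc_of_le _ hwF₂, sup_comm, (hwψ.codisjoint_span_iInf_ker n).eq_top, inf_top_eq]
  · refine strictMono_nat_of_lt_succ fun n => ?_
    simp only [inf_inf_sup_eq_of_le (hvF₁ _) (hF₁ψ _)]
    refine lt_of_le_of_ne (sup_le_sup_left (span_mono (image_mono (Iio_subset_Iio n.le_succ))) _)
      fun heq => hvχ.notMem_sup_span (X := F₁ ⊓ F₂) (inf_le_right.trans (hF₂χ (n + 1))) ?_
    exact heq ▸ mem_sup_right (subset_span ⟨n, n.lt_succ_self, rfl⟩)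

/-- If `F₁` (an intersection of kernels of elements of `V_*`) and the
weakly `E`-compatible subspace `F₂` are such that `F₁ ∩ F₂` has infinite codimension in both
`F₁` and `F₂`, then there is a sequence `{F⁽ⁿ⁾}` of subspaces, each `E`-commensurable with
`F₂`, with `F⁽⁰⁾ = F₂` and `F₁ ∩ F⁽⁰⁾ ⊊ F₁ ∩ F⁽¹⁾ ⊊ ⋯` strictly increasing. -/
theorem stmt11 {ι V : Type*} [Countable ι] [AddCommGroup V] [Module ℂ V]
    (E : Module.Basis ι ℂ V) (Vs : Submodule ℂ (Module.Dual ℂ V))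
    (hVs : Vs = Submodule.span ℂ (Set.range fun i => E.coord i))
    (Φ : Set (Module.Dual ℂ V)) (hΦ : Φ ⊆ (Vs : Set (Module.Dual ℂ V)))
    (F₁ : Submodule ℂ V) (hF₁ : F₁ = ⨅ φ ∈ Φ, LinearMap.ker φ)
    (F₂ : Submodule ℂ V) (hF₂ : WeaklyCompat E F₂)
    (hcodim₁ : ¬ FiniteDimensional ℂ (↥F₁ ⧸ Submodule.comap F₁.subtype (F₁ ⊓ F₂)))
    (hcodim₂ : ¬ FiniteDimensional ℂ (↥F₂ ⧸ Submodule.comap F₂.subtype (F₁ ⊓ F₂))) :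
    ∃ Fs : ℕ → Submodule ℂ V, Fs 0 = F₂ ∧ (∀ n, CommensurableWith E F₂ (Fs n)) ∧
      StrictMono fun n => F₁ ⊓ Fs n :=
  stmt11_general E Vs hVs Φ hΦ F₁ hF₁ F₂ hF₂ hcodim₁ hcodim₂
end
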